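/- arXiv:2304.12599 — 8 statements merged into one kernel-verified Lean document; each statement's English description precedes it below -/
import Mathlib

section
/- Let k be an algebraically closed field, let n ≥ 1, and let h₁, …, hₙ be polynomials in k[z₁, …, zₙ] such that for each i there is an integer dᵢ ≥ 1 with hᵢ = zᵢ^{dᵢ} + (terms of total degree strictly less than dᵢ), i.e. the total degree of hᵢ − zᵢ^{dᵢ} is strictly less than dᵢ. Then h₁, …, hₙ have a common zero in kⁿ, i.e. there exists a point z ∈ kⁿ with hᵢ(z) = 0 for all i. -/
/-!
Substituting `zᵢ ↦ hᵢ` makes `k[z]` a finite module over `A = k[h₁, …, hₙ]`: the monomials `z^b`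
with all `bᵢ < dᵢ` generate it, because `zⱼ^{dⱼ} = hⱼ - (terms of degree < dⱼ)` lets one lower the
degree of any other monomial. So `k[z]` is integral over `A`, hence `A` has transcendence degree `n`
and the `hᵢ` are algebraically independent: `A` is a polynomial ring in the `hᵢ`. By lying over, its
maximal ideal `(h₁, …, hₙ)` lies under a maximal ideal of `k[z]`, which by the Nullstellensatz is the
ideal of a point; that point is a common zero of the `hᵢ`.
-/

open MvPolynomial

namespace MvPolynomial

variable {R σ : Type*}

theorem mem_of_forall_monomial_one_mem [CommSemiring R] {A : Type*} [Semiring A] [SMul R A]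
    [Module A (MvPolynomial σ R)] [IsScalarTower R A (MvPolynomial σ R)]
    {M : Submodule A (MvPolynomial σ R)} {p : MvPolynomial σ R}
    (hp : ∀ b ∈ p.support, monomial b 1 ∈ M) : p ∈ M := by
  rw [← support_sum_monomial_coeff p]
  refine Submodule.sum_mem _ fun b hb => ?_
  simpa only [smul_monomial, smul_eq_mul, mul_one] using
    Submodule.smul_of_tower_mem M (coeff b p) (hp b hb)

variable [CommRing R]

theorem span_adjoin_monomial_eq_top {h : σ → MvPolynomial σ R} {d : σ → ℕ}
    (hd : ∀ i, (h i - X i ^ d i).totalDegree < d i) :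
    Submodule.span (Algebra.adjoin R (Set.range h))
      ((monomial · (1 : R)) '' {b | ∀ i, b i < d i}) = ⊤ := by
  refine Submodule.eq_top_iff'.mpr fun p => ?_
  induction hs : p.totalDegree using Nat.strong_induction_on generalizing p with
  | _ s ih =>
  refine mem_of_forall_monomial_one_mem fun b hb => ?_
  by_cases hlt : ∀ i, b i < d i
  · exact Submodule.subset_span ⟨b, hlt, rfl⟩
  obtain ⟨j, hj⟩ := not_forall.mp hlt
  obtain ⟨c, rfl⟩ : ∃ c, b = c + Finsupp.single j (d j) :=
    ⟨_, (tsub_add_cancel_of_le (Finsupp.single_le_iff.mpr (not_lt.mp hj))).symm⟩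
  have hdeg : c.degree + d j ≤ s := by
    have hb' : (c + Finsupp.single j (d j)).degree ≤ s := hs ▸ le_totalDegree hb
    simpa using hb'
  have hc : (monomial c (1 : R)).totalDegree ≤ c.degree := totalDegree_monomial_le c 1
  have hsplit : monomial (c + Finsupp.single j (d j)) (1 : R) =
      (⟨h j, Algebra.subset_adjoin ⟨j, rfl⟩⟩ : Algebra.adjoin R (Set.range h)) • monomial c 1 -
        monomial c 1 * (h j - X j ^ d j) := by
    have hX : monomial (c + Finsupp.single j (d j)) (1 : R) = monomial c 1 * X j ^ d j := by
      rw [X_pow_eq_monomial, monomial_mul, one_mul]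
    rw [hX, Subalgebra.smul_def, smul_eq_mul]
    ring
  rw [hsplit]
  refine sub_mem (Submodule.smul_mem _ _ (ih _ ?_ _ rfl)) (ih _ ?_ _ rfl)
  · have := Nat.zero_lt_of_lt (hd j)
    omega
  · have := totalDegree_mul (monomial c (1 : R)) (h j - X j ^ d j)
    have := hd j
    omega

theorem finite_adjoin_of_totalDegree_sub_X_pow_lt [Finite σ] {h : σ → MvPolynomial σ R}
    {d : σ → ℕ} (hd : ∀ i, (h i - X i ^ d i).totalDegree < d i) :
    Module.Finite (Algebra.adjoin R (Set.range h)) (MvPolynomial σ R) := by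
  classical
  have hfin : {b : σ →₀ ℕ | ∀ i, b i < d i}.Finite :=
    (Set.finite_Iic (Finsupp.equivFunOnFinite.symm d)).subset fun b hb i => (hb i).le
  exact ⟨⟨(hfin.image _).toFinset, by rw [Set.Finite.coe_toFinset, span_adjoin_monomial_eq_top hd]⟩⟩

theorem algebraicIndependent_of_isAlgebraic_adjoin {k : Type*} [Field k] [Finite σ]
    (h : σ → MvPolynomial σ k)
    [Algebra.IsAlgebraic (Algebra.adjoin k (Set.range h)) (MvPolynomial σ k)] :
    AlgebraicIndependent k h :=
  (Algebra.IsAlgebraic.isTranscendenceBasis_of_lift_le_trdeg_of_finite k h (by simp)).1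

theorem exists_common_zero_of_isIntegral_adjoin {k : Type*} [Field k] [IsAlgClosed k] [Finite σ]
    (h : σ → MvPolynomial σ k)
    [Algebra.IsIntegral (Algebra.adjoin k (Set.range h)) (MvPolynomial σ k)] :
    ∃ z : σ → k, ∀ i, eval z (h i) = 0 := by
  have hind := algebraicIndependent_of_isAlgebraic_adjoin h
  -- `hᵢ ↦ 0`, well defined because `A ≅ k[X]` via `Xᵢ ↦ hᵢ`
  let φ := (aeval (0 : σ → k)).comp hind.repr
  have : (RingHom.ker φ).IsMaximal :=
    RingHom.ker_isMaximal_of_surjective φ fun c => ⟨algebraMap k _ c, by simp [φ]⟩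
  obtain ⟨Q, hQ, hQφ⟩ := Ideal.exists_ideal_over_maximal_of_isIntegral (S := MvPolynomial σ k)
    (RingHom.ker φ) (by
      rw [(RingHom.injective_iff_ker_eq_bot _).mp Subtype.val_injective]
      exact bot_le)
  obtain ⟨z, rfl⟩ := isMaximal_iff_eq_vanishingIdeal_singleton.mp hQ
  refine ⟨z, fun i => ?_⟩
  have hX : hind.aevalEquiv (X i) = ⟨h i, Algebra.subset_adjoin ⟨i, rfl⟩⟩ := Subtype.ext (by simp)
  have hφ : φ ⟨h i, Algebra.subset_adjoin ⟨i, rfl⟩⟩ = 0 := by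
    simp [φ, ← hX, AlgebraicIndependent.repr]
  rw [← RingHom.mem_ker, ← hQφ, Ideal.mem_comap, mem_vanishingIdeal_singleton_iff] at hφ
  simpa using hφ

end MvPolynomial

theorem common_zero_of_monic_in_own_variable_general
    (k : Type*) [Field k] [IsAlgClosed k] (n : ℕ)
    (h : Fin n → MvPolynomial (Fin n) k)
    (hdeg : ∀ i : Fin n, ∃ d : ℕ, 1 ≤ d ∧ (h i - X i ^ d).totalDegree < d) :
    ∃ z : Fin n → k, ∀ i : Fin n, eval z (h i) = 0 := by
  choose d _ hd using hdeg
  have := finite_adjoin_of_totalDegree_sub_X_pow_lt hd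
  have := Algebra.IsIntegral.of_finite (Algebra.adjoin k (Set.range h)) (MvPolynomial (Fin n) k)
  exact exists_common_zero_of_isIntegral_adjoin h

/-- Lemma 5.2 (Lemma `lem:aux`) of the paper: if each `hᵢ` is `zᵢ^{dᵢ}` plus terms of
total degree `< dᵢ`, then the `hᵢ` have a common zero over an algebraically closed field. -/
theorem common_zero_of_monic_in_own_variable
    (k : Type*) [Field k] [IsAlgClosed k] (n : ℕ) (hn : 1 ≤ n)
    (h : Fin n → MvPolynomial (Fin n) k)
    (hdeg : ∀ i : Fin n, ∃ d : ℕ, 1 ≤ d ∧ (h i - X i ^ d).totalDegree < d) :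
    ∃ z : Fin n → k, ∀ i : Fin n, eval z (h i) = 0 :=
  common_zero_of_monic_in_own_variable_general k n h hdeg
end

section
/- Let k be an algebraically closed field of characteristic 2 and let a₉, a₁₀, a₁₄, a₁₈ ∈ k[t] with deg a₉ ≤ 9, deg a₁₀ ≤ 10, deg a₁₄ ≤ 14, deg a₁₈ ≤ 18. Then the set of triples (b₄, b₅, b₉) of polynomials in k[t] with deg b₄ ≤ 4, deg b₅ ≤ 5, deg b₉ ≤ 9 for which there exist a₄′, a₃′, A₁₄ ∈ k[t] with deg a₄′ ≤ 4, deg a₃′ ≤ 3, deg A₁₄ ≤ 14 satisfying the identity (y + b₅·x + b₉)² + a₉·(y + b₅·x + b₉) + t·(x + b₄)⁴ + a₁₀·(x + b₄)² + a₁₄·(x + b₄) + a₁₈ = y² + a₉·y + t·x⁴ + t·a₄′²·x² + A₁₄·x + t³·a₃′⁴ in k[t][x, y], is a finite set. -/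
/-!
In characteristic 2 the substitution `(x, y) ↦ (x + b₄, y + b₅x + b₉)` changes only the
coefficients of `x²`, `x` and `1`, so an admissible triple satisfies
`b₅² + a₁₀ = t·a₄'²` and `b₉² + a₉b₉ + t b₄⁴ + a₁₀b₄² + a₁₄b₄ + a₁₈ = t³a₃'⁴`.
The first equation determines `b₅`: two solutions give `(b₅ + c₅)² = t·(…)²`, impossible by degree
parity unless `b₅ = c₅`. The second is additive in `(b₄, b₉, a₃')`, so it suffices to show that
the homogeneous equation has finitely many solutions of bounded degree. Writing every polynomial
as `g(t²) + t·h(t²)` and `f² = φf(t²)`, with `φ` the coefficientwise Frobenius, the homogeneous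
equation becomes a system `φw = Lw` for `w = (b₉, b₄, φb₄)` with `L` linear. Over a perfect field
of characteristic `p`, the coordinates of a solution of such a system in a basis of solutions are
fixed by Frobenius, so lie in `𝔽_p`, and there are finitely many solutions.
-/

namespace MvPolynomial

variable {R : Type*} [CommRing R] [CharP R 2]

theorem substitution_eq_charTwo (t a₉ a₁₀ a₁₄ a₁₈ b₄ b₅ b₉ : R) :
    (X 1 + C b₅ * X 0 + C b₉) ^ 2 + C a₉ * (X 1 + C b₅ * X 0 + C b₉)
      + C t * (X 0 + C b₄) ^ 4 + C a₁₀ * (X 0 + C b₄) ^ 2 + C a₁₄ * (X 0 + C b₄) + C a₁₈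
    = (X 1 : MvPolynomial (Fin 2) R) ^ 2 + C a₉ * X 1 + C t * X 0 ^ 4
      + C (b₅ ^ 2 + a₁₀) * X 0 ^ 2 + C (a₉ * b₅ + a₁₄) * X 0
      + C (b₉ ^ 2 + a₉ * b₉ + t * b₄ ^ 4 + a₁₀ * b₄ ^ 2 + a₁₄ * b₄ + a₁₈) := by
  simp only [map_add, map_mul, map_pow]
  linear_combination (X 1 * C b₅ * X 0 + X 1 * C b₉ + C b₅ * X 0 * C b₉
      + C t * (2 * X 0 ^ 3 * C b₄ + 3 * X 0 ^ 2 * C b₄ ^ 2 + 2 * X 0 * C b₄ ^ 3)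
      + C a₁₀ * X 0 * C b₄) * CharTwo.two_eq_zero (R := MvPolynomial (Fin 2) R)

theorem eqs_of_substitution_eq_normalForm {t a₉ a₁₀ a₁₄ a₁₈ b₄ b₅ b₉ a₄ a₃ A₁₄ : R}
    (h : let x : MvPolynomial (Fin 2) R := X 0
         let y : MvPolynomial (Fin 2) R := X 1
         let Ct : R → MvPolynomial (Fin 2) R := C
         (y + Ct b₅ * x + Ct b₉) ^ 2 + Ct a₉ * (y + Ct b₅ * x + Ct b₉)
           + Ct t * (x + Ct b₄) ^ 4 + Ct a₁₀ * (x + Ct b₄) ^ 2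
           + Ct a₁₄ * (x + Ct b₄) + Ct a₁₈
         = y ^ 2 + Ct a₉ * y + Ct t * x ^ 4 + Ct t * (Ct a₄) ^ 2 * x ^ 2
           + Ct A₁₄ * x + (Ct t) ^ 3 * (Ct a₃) ^ 4) :
    b₅ ^ 2 + a₁₀ = t * a₄ ^ 2 ∧
      b₉ ^ 2 + a₉ * b₉ + t * b₄ ^ 4 + a₁₀ * b₄ ^ 2 + a₁₄ * b₄ + a₁₈ = t ^ 3 * a₃ ^ 4 := by
  dsimp only at h
  rw [substitution_eq_charTwo, ← map_pow, ← map_mul, ← map_pow, ← map_pow, ← map_mul] at h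
  constructor
  · have h₂ := congrArg (coeff (Finsupp.single 0 2)) h
    simp only [coeff_add, coeff_C_mul, coeff_X_pow, coeff_X, coeff_C] at h₂
    simpa [Finsupp.single_eq_single_iff, (Finsupp.single_ne_zero.mpr two_ne_zero).symm] using h₂
  · simpa using congrArg constantCoeff h

end MvPolynomial

open Polynomial

theorem finite_setOf_semilinear_eq_linear {k V M : Type*} [Field k] {p : ℕ} [hp : Fact p.Prime]
    [CharP k p] [PerfectRing k p] [AddCommGroup V] [Module k V] [FiniteDimensional k V]
    [AddCommGroup M] [Module k M] (τ : V →ₛₗ[frobenius k p] M) (hτ : Function.Injective τ)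
    (L : V →ₗ[k] M) : {v | τ v = L v}.Finite := by
  obtain ⟨b, hbS, hspan, hli⟩ := exists_linearIndependent k {v | τ v = L v}
  have : Fintype b := hli.setFinite.fintype
  have hfix : {c : k | c ^ p = c}.Finite :=
    (finite_setOfPred_isRoot (FiniteField.X_pow_card_sub_X_ne_zero k hp.out.one_lt)).subset
      fun c (hc : c ^ p = c) => by simp [hc]
  refine ((Set.Finite.pi (t := fun _ : b => {c : k | c ^ p = c}) fun _ => hfix).image
    fun c => ∑ i : b, c i • (i : V)).subset fun v hv => ?_
  obtain ⟨c, rfl⟩ := (Submodule.mem_span_range_iff_exists_fun k).mp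
    (by rw [Subtype.range_coe, hspan]; exact Submodule.subset_span hv)
  refine ⟨c, fun i _ => ?_, rfl⟩
  choose r hr using fun i => surjective_frobenius k p (c i)
  -- `τ` maps both expansions below to `L v`
  have hcr : ∑ i, c i • (i : V) = ∑ i, r i • (i : V) := hτ <| by
    rw [hv, map_sum, map_sum]
    refine Finset.sum_congr rfl fun i _ => ?_
    rw [L.map_smul, τ.map_smulₛₗ, hr, hbS i.2]
  have hci := Fintype.linearIndependent_iffₛ.mp hli c r hcr i
  simpa [hci, frobenius_def] using hr i

namespace Polynomial

variable {R : Type*} [CommSemiring R]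

noncomputable def evenPart : R[X] →ₗ[R] R[X] where
  toFun := contract 2
  map_add' := contract_add two_ne_zero
  map_smul' c f := by ext n; simp [coeff_contract]

noncomputable def oddPart : R[X] →ₗ[R] R[X] where
  toFun f := contract 2 f.divX
  map_add' f g := by rw [divX_add, contract_add two_ne_zero]
  map_smul' c f := by ext n; simp [coeff_contract, coeff_divX]

@[simp]
theorem coeff_evenPart (f : R[X]) (n : ℕ) : (evenPart f).coeff n = f.coeff (2 * n) := by
  rw [evenPart, LinearMap.coe_mk, AddHom.coe_mk, coeff_contract two_ne_zero, mul_comm]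

@[simp]
theorem coeff_oddPart (f : R[X]) (n : ℕ) : (oddPart f).coeff n = f.coeff (2 * n + 1) := by
  rw [oddPart, LinearMap.coe_mk, AddHom.coe_mk, coeff_contract two_ne_zero, coeff_divX, mul_comm]

theorem coeff_expand_add_X_mul_expand_two_mul (g h : R[X]) (n : ℕ) :
    (expand R 2 g + X * expand R 2 h).coeff (2 * n) = g.coeff n := by
  cases n <;> simp [mul_add, coeff_expand]

theorem coeff_expand_add_X_mul_expand_two_mul_add_one (g h : R[X]) (n : ℕ) :
    (expand R 2 g + X * expand R 2 h).coeff (2 * n + 1) = h.coeff n := by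
  simp [coeff_expand]

theorem evenPart_expand_add_X_mul_expand (g h : R[X]) :
    evenPart (expand R 2 g + X * expand R 2 h) = g :=
  ext fun n => by rw [coeff_evenPart, coeff_expand_add_X_mul_expand_two_mul]

theorem oddPart_expand_add_X_mul_expand (g h : R[X]) :
    oddPart (expand R 2 g + X * expand R 2 h) = h :=
  ext fun n => by rw [coeff_oddPart, coeff_expand_add_X_mul_expand_two_mul_add_one]

theorem expand_add_X_mul_expand_eq_zero {g h : R[X]}
    (hgh : expand R 2 g + X * expand R 2 h = 0) : g = 0 ∧ h = 0 :=
  ⟨by simpa only [evenPart_expand_add_X_mul_expand, map_zero] using congrArg evenPart hgh,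
    by simpa only [oddPart_expand_add_X_mul_expand, map_zero] using congrArg oddPart hgh⟩

theorem expand_evenPart_add_X_mul_expand_oddPart (f : R[X]) :
    expand R 2 (evenPart f) + X * expand R 2 (oddPart f) = f := by
  ext n
  obtain ⟨m, rfl | rfl⟩ := Nat.even_or_odd' n
  · rw [coeff_expand_add_X_mul_expand_two_mul, coeff_evenPart]
  · rw [coeff_expand_add_X_mul_expand_two_mul_add_one, coeff_oddPart]

theorem sq_eq_expand_map_frobenius [ExpChar R 2] (f : R[X]) :
    f ^ 2 = expand R 2 (f.map (frobenius R 2)) := by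
  rw [← map_expand, map_frobenius_expand]

theorem eq_zero_of_sq_eq_X_mul_sq {R : Type*} [CommRing R] [IsDomain R] {f g : R[X]}
    (h : f ^ 2 = X * g ^ 2) : f = 0 := by
  rcases eq_or_ne g 0 with rfl | hg
  · simpa using h
  · have hdeg := congrArg natDegree h
    rw [natDegree_pow, natDegree_mul X_ne_zero (pow_ne_zero 2 hg), natDegree_X,
      natDegree_pow] at hdeg
    omega

theorem subsingleton_setOf_sq_add_eq_X_mul_sq {R : Type*} [CommRing R] [IsDomain R] [CharP R 2]
    (a : R[X]) : {f : R[X] | ∃ u, f ^ 2 + a = X * u ^ 2}.Subsingleton := by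
  rintro f ⟨u, hf⟩ g ⟨v, hg⟩
  have hsum : (f + g) ^ 2 = X * (u + v) ^ 2 := by
    rw [CharTwo.add_sq, CharTwo.add_sq]
    linear_combination hf + hg - a * CharTwo.two_eq_zero (R := R[X])
  exact CharTwo.add_eq_zero.mp (eq_zero_of_sq_eq_X_mul_sq hsum)

end Polynomial

section FrobeniusSystem

variable {k : Type*} [Field k] [CharP k 2]

noncomputable def mapFrobeniusTriple :
    k[X] × k[X] × k[X] →ₛₗ[frobenius k 2] k[X] × k[X] × k[X] where
  toFun w := (w.1.map (frobenius k 2), w.2.1.map (frobenius k 2), w.2.2.map (frobenius k 2))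
  map_add' _ _ := by simp only [Prod.fst_add, Prod.snd_add, Polynomial.map_add, Prod.mk_add_mk]
  map_smul' _ _ := by simp only [Prod.smul_fst, Prod.smul_snd, Polynomial.map_smul, Prod.smul_mk]

theorem mapFrobeniusTriple_injective : Function.Injective (mapFrobeniusTriple (k := k)) := by
  intro v w h
  simp only [mapFrobeniusTriple, LinearMap.coe_mk, AddHom.coe_mk, Prod.mk.injEq] at h
  have hinj := map_injective _ (frobenius_inj k 2)
  exact Prod.ext (hinj h.1) (Prod.ext (hinj h.2.1) (hinj h.2.2))

/-- `w = (d, b, b')` stands for `(d, b, φ b)`; the first and last components are the even part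
and the even part of the odd part of `d² + a₉ d + X b⁴ + a₁₀ b² + a₁₄ b`. -/
noncomputable def evenOddSystem (a₉ a₁₀ a₁₄ : k[X]) :
    k[X] × k[X] × k[X] →ₗ[k] k[X] × k[X] × k[X] where
  toFun w :=
    (evenPart (a₉ * w.1 + a₁₄ * w.2.1) + evenPart a₁₀ * w.2.2, w.2.2,
      evenPart (oddPart (a₉ * w.1 + a₁₄ * w.2.1) + oddPart a₁₀ * w.2.2))
  map_add' _ _ := by
    simp only [Prod.fst_add, Prod.snd_add, mul_add, map_add, Prod.mk_add_mk]
    abel_nf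
  map_smul' _ _ := by
    simp only [Prod.smul_fst, Prod.smul_snd, mul_smul_comm, ← smul_add, map_smul, Prod.smul_mk,
      RingHom.id_apply]

theorem mapFrobeniusTriple_eq_evenOddSystem {a₉ a₁₀ a₁₄ d b e : k[X]}
    (h : d ^ 2 + a₉ * d + X * b ^ 4 + a₁₀ * b ^ 2 + a₁₄ * b = X ^ 3 * e ^ 4) :
    mapFrobeniusTriple (d, b, b.map (frobenius k 2)) =
      evenOddSystem a₉ a₁₀ a₁₄ (d, b, b.map (frobenius k 2)) := by
  set φ : k[X] → k[X] := map (frobenius k 2)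
  obtain ⟨R, hR⟩ : ∃ R, R = a₉ * d + a₁₄ * b := ⟨_, rfl⟩
  obtain ⟨J, hJ⟩ : ∃ J, J = oddPart R + oddPart a₁₀ * φ b := ⟨_, rfl⟩
  have pow_four_eq (f : k[X]) : f ^ 4 = expand k 2 (expand k 2 (φ (φ f))) := by
    rw [show f ^ 4 = (f ^ 2) ^ 2 by ring, sq_eq_expand_map_frobenius f, ← map_pow,
      sq_eq_expand_map_frobenius (φ f)]
  have hsplit : expand k 2 (φ d + evenPart R + evenPart a₁₀ * φ b) +
      X * expand k 2 (J + expand k 2 (φ (φ b)) + X * expand k 2 (φ (φ e))) = 0 := by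
    rw [← CharTwo.add_self_eq_zero (X ^ 3 * e ^ 4)]
    nth_rw 1 [← h]
    rw [pow_four_eq, pow_four_eq, sq_eq_expand_map_frobenius d, sq_eq_expand_map_frobenius b, hJ]
    simp only [map_add, map_mul, expand_X]
    linear_combination hR + expand_evenPart_add_X_mul_expand_oddPart R
      + expand k 2 (φ b) * expand_evenPart_add_X_mul_expand_oddPart a₁₀
  obtain ⟨hEven, hOdd⟩ := expand_add_X_mul_expand_eq_zero hsplit
  have hJsplit : expand k 2 (evenPart J + φ (φ b)) + X * expand k 2 (oddPart J + φ (φ e)) = 0 := by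
    simp only [map_add]
    linear_combination hOdd + expand_evenPart_add_X_mul_expand_oddPart J
  have hJEven := (expand_add_X_mul_expand_eq_zero hJsplit).1
  simp only [mapFrobeniusTriple, evenOddSystem, LinearMap.coe_mk, AddHom.coe_mk, Prod.mk.injEq]
  refine ⟨?_, rfl, ?_⟩
  · rw [← hR, ← CharTwo.add_eq_zero, ← add_assoc, hEven]
  · rw [← hR, ← hJ, eq_comm, ← CharTwo.add_eq_zero, hJEven]

variable [PerfectRing k 2]

theorem finite_setOf_homogeneous_eq (a₉ a₁₀ a₁₄ : k[X]) (m n : ℕ) :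
    {bd : k[X] × k[X] | bd.1.natDegree ≤ m ∧ bd.2.natDegree ≤ n ∧ ∃ e : k[X],
      bd.2 ^ 2 + a₉ * bd.2 + X * bd.1 ^ 4 + a₁₀ * bd.1 ^ 2 + a₁₄ * bd.1 =
        X ^ 3 * e ^ 4}.Finite := by
  classical
  let V : Submodule k (k[X] × k[X] × k[X]) :=
    (degreeLE k n).prod ((degreeLE k m).prod (degreeLE k m))
  have hfg (j : ℕ) : (degreeLE k j).FG := ⟨_, degreeLE_eq_span_X_pow.symm⟩
  have : FiniteDimensional k V := Module.Finite.iff_fg.mpr ((hfg n).prod ((hfg m).prod (hfg m)))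
  refine ((finite_setOf_semilinear_eq_linear (mapFrobeniusTriple.comp V.subtype)
    (mapFrobeniusTriple_injective.comp Subtype.val_injective)
    ((evenOddSystem a₉ a₁₀ a₁₄).comp V.subtype)).image
      fun w : V => ((w : k[X] × k[X] × k[X]).2.1, (w : k[X] × k[X] × k[X]).1)).subset ?_
  rintro ⟨b, d⟩ ⟨hb, hd, e, h⟩
  have hb' : (b.map (frobenius k 2)).natDegree ≤ m := natDegree_map_le.trans hb
  refine ⟨⟨(d, b, b.map (frobenius k 2)), ?_, ?_, ?_⟩, mapFrobeniusTriple_eq_evenOddSystem h, rfl⟩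
    <;> exact mem_degreeLE.mpr (natDegree_le_iff_degree_le.mp ‹_›)

theorem finite_setOf_inhomogeneous_eq (a₉ a₁₀ a₁₄ a₁₈ : k[X]) (m n : ℕ) :
    {bd : k[X] × k[X] | bd.1.natDegree ≤ m ∧ bd.2.natDegree ≤ n ∧ ∃ e : k[X],
      bd.2 ^ 2 + a₉ * bd.2 + X * bd.1 ^ 4 + a₁₀ * bd.1 ^ 2 + a₁₄ * bd.1 + a₁₈ =
        X ^ 3 * e ^ 4}.Finite := by
  set S := {bd : k[X] × k[X] | bd.1.natDegree ≤ m ∧ bd.2.natDegree ≤ n ∧ ∃ e : k[X],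
      bd.2 ^ 2 + a₉ * bd.2 + X * bd.1 ^ 4 + a₁₀ * bd.1 ^ 2 + a₁₄ * bd.1 + a₁₈ = X ^ 3 * e ^ 4}
  rcases S.eq_empty_or_nonempty with hS | ⟨β, hβ₁, hβ₂, ε, hβ⟩
  · rw [hS]; exact Set.finite_empty
  have add_pow_four (f g : k[X]) : (f + g) ^ 4 = f ^ 4 + g ^ 4 := by
    rw [show 4 = 2 * 2 from rfl, pow_mul, pow_mul, pow_mul, CharTwo.add_sq, CharTwo.add_sq]
  -- in characteristic 2, `· + β` maps `S` into the homogeneous solutions and is an involution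
  refine ((finite_setOf_homogeneous_eq a₉ a₁₀ a₁₄ m n).image (· + β)).subset ?_
  rintro ⟨b, d⟩ ⟨hb, hd, e, h⟩
  refine ⟨(b, d) + β, ⟨(natDegree_add_le _ _).trans (max_le hb hβ₁),
    (natDegree_add_le _ _).trans (max_le hd hβ₂), e + ε, ?_⟩, CharTwo.add_cancel_right _ _⟩
  simp only [Prod.fst_add, Prod.snd_add, CharTwo.add_sq, add_pow_four]
  linear_combination h + hβ - a₁₈ * CharTwo.two_eq_zero (R := k[X])

end FrobeniusSystem

theorem normal_form_transformations_finite_general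
    (k : Type*) [Field k] [IsAlgClosed k] [CharP k 2]
    (a₉ a₁₀ a₁₄ a₁₈ : k[X]) :
    {bs : k[X] × k[X] × k[X] |
      bs.1.natDegree ≤ 4 ∧ bs.2.1.natDegree ≤ 5 ∧ bs.2.2.natDegree ≤ 9 ∧
      ∃ a₄' a₃' A₁₄ : k[X],
        a₄'.natDegree ≤ 4 ∧ a₃'.natDegree ≤ 3 ∧ A₁₄.natDegree ≤ 14 ∧
        (let x : MvPolynomial (Fin 2) k[X] := MvPolynomial.X 0
         let y : MvPolynomial (Fin 2) k[X] := MvPolynomial.X 1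
         let Ct : k[X] → MvPolynomial (Fin 2) k[X] := MvPolynomial.C
         (y + Ct bs.2.1 * x + Ct bs.2.2) ^ 2 + Ct a₉ * (y + Ct bs.2.1 * x + Ct bs.2.2)
           + Ct X * (x + Ct bs.1) ^ 4 + Ct a₁₀ * (x + Ct bs.1) ^ 2
           + Ct a₁₄ * (x + Ct bs.1) + Ct a₁₈
         = y ^ 2 + Ct a₉ * y + Ct X * x ^ 4 + Ct X * (Ct a₄') ^ 2 * x ^ 2
           + Ct A₁₄ * x + (Ct X) ^ 3 * (Ct a₃') ^ 4)}.Finite := by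
  refine (((finite_setOf_inhomogeneous_eq a₉ a₁₀ a₁₄ a₁₈ 4 9).prod
    (subsingleton_setOf_sq_add_eq_X_mul_sq a₁₀).finite).image
      fun p => (p.1.1, p.2, p.1.2)).subset ?_
  rintro ⟨b₄, b₅, b₉⟩ ⟨h₄, -, h₉, a₄', a₃', A₁₄, -, -, -, h⟩
  obtain ⟨h₂, h₀⟩ := MvPolynomial.eqs_of_substitution_eq_normalForm h
  exact ⟨((b₄, b₉), b₅), ⟨⟨h₄, h₉, a₃', h₀⟩, a₄', h₂⟩, rfl⟩

/-- Corollary 5.3 of the paper: the set of admissible transformations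
`(x, y) ↦ (x + b₄, y + b₅x + b₉)` converting the general equation to the
normal form is finite. -/
theorem normal_form_transformations_finite
    (k : Type*) [Field k] [IsAlgClosed k] [CharP k 2]
    (a₉ a₁₀ a₁₄ a₁₈ : k[X])
    (h9 : a₉.natDegree ≤ 9) (h10 : a₁₀.natDegree ≤ 10)
    (h14 : a₁₄.natDegree ≤ 14) (h18 : a₁₈.natDegree ≤ 18) :
    {bs : k[X] × k[X] × k[X] |
      bs.1.natDegree ≤ 4 ∧ bs.2.1.natDegree ≤ 5 ∧ bs.2.2.natDegree ≤ 9 ∧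
      ∃ a₄' a₃' A₁₄ : k[X],
        a₄'.natDegree ≤ 4 ∧ a₃'.natDegree ≤ 3 ∧ A₁₄.natDegree ≤ 14 ∧
        (let x : MvPolynomial (Fin 2) k[X] := MvPolynomial.X 0
         let y : MvPolynomial (Fin 2) k[X] := MvPolynomial.X 1
         let Ct : k[X] → MvPolynomial (Fin 2) k[X] := MvPolynomial.C
         (y + Ct bs.2.1 * x + Ct bs.2.2) ^ 2 + Ct a₉ * (y + Ct bs.2.1 * x + Ct bs.2.2)
           + Ct X * (x + Ct bs.1) ^ 4 + Ct a₁₀ * (x + Ct bs.1) ^ 2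
           + Ct a₁₄ * (x + Ct bs.1) + Ct a₁₈
         = y ^ 2 + Ct a₉ * y + Ct X * x ^ 4 + Ct X * (Ct a₄') ^ 2 * x ^ 2
           + Ct A₁₄ * x + (Ct X) ^ 3 * (Ct a₃') ^ 4)}.Finite :=
  normal_form_transformations_finite_general k a₉ a₁₀ a₁₄ a₁₈
end

section
/- Let F be a field of characteristic 2 and let t, a₄, a₉, a₁₄, x, y ∈ F with a₉ ≠ 0. Suppose y² + a₉·y = t·x⁴ + t·a₄²·x² + a₁₄·x. Define y₁ = y + (a₁₄/a₉)·x + (a₄²·t/a₉ + a₁₄²/a₉³)·x² and h = t + a₄⁴·t²/a₉² + a₁₄⁴/a₉⁶, and assume y₁ ≠ 0. Define x₃ = a₉³·h·x²/y₁, y₃ = a₉⁵·h·x/y₁, X = (x₃ + a₁₄²)/a₉², and Y = (y₃ + a₁₄·x₃ + a₁₄³ + a₁₄·a₄²·a₉²·t)/a₉³. Then Y² = X³ + (a₉²·t + a₄⁴·t²)·X + a₁₄²·t. -/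
/-! In characteristic 2 the map `y ↦ y² + a₉y` is additive, so the shift `y₁ = y + u(x)` by a
suitable quadratic `u` absorbs the terms `ta₄²x² + a₁₄x` and leaves the quartic curve
`y₁² + a₉y₁ = hx⁴`. The substitution `(x, y₁) ↦ (a₉³hx²/y₁, a₉⁵hx/y₁)` maps this onto the cubic
`y₃² = x₃³ + a₉⁶hx₃`, and `(X, Y)` arises from `(x₃, y₃)` by the Weierstrass change of variables
`x₃ = a₉²X + a₁₄²`, `y₃ = a₉³Y + a₉²a₁₄X + a₉²a₄²a₁₄t`. -/

theorem add_sq_add_mul_add {R : Type*} [CommRing R] [CharP R 2] (a y u : R) :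
    (y + u) ^ 2 + a * (y + u) = (y ^ 2 + a * y) + (u ^ 2 + a * u) := by
  rw [CharTwo.add_sq]
  ring

section CharTwoField

variable {F : Type*} [Field F] [CharP F 2]

theorem sq_add_mul_quadratic_shift {a : F} (ha : a ≠ 0) (b c t x : F) :
    (c / a * x + (b ^ 2 * t / a + c ^ 2 / a ^ 3) * x ^ 2) ^ 2
        + a * (c / a * x + (b ^ 2 * t / a + c ^ 2 / a ^ 3) * x ^ 2) =
      c * x + t * b ^ 2 * x ^ 2 + (b ^ 4 * t ^ 2 / a ^ 2 + c ^ 4 / a ^ 6) * x ^ 4 := by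
  field_simp
  grind

theorem quartic_of_quadratic_shift {a b c t x y : F} (ha : a ≠ 0)
    (heq : y ^ 2 + a * y = t * x ^ 4 + t * b ^ 2 * x ^ 2 + c * x) :
    (y + c / a * x + (b ^ 2 * t / a + c ^ 2 / a ^ 3) * x ^ 2) ^ 2
        + a * (y + c / a * x + (b ^ 2 * t / a + c ^ 2 / a ^ 3) * x ^ 2) =
      (t + b ^ 4 * t ^ 2 / a ^ 2 + c ^ 4 / a ^ 6) * x ^ 4 := by
  rw [add_assoc, add_sq_add_mul_add, heq, sq_add_mul_quadratic_shift ha]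
  grind

theorem cubic_of_quartic {a h x y : F} (hy : y ≠ 0) (hquartic : y ^ 2 + a * y = h * x ^ 4) :
    (a ^ 5 * h * x / y) ^ 2 = (a ^ 3 * h * x ^ 2 / y) ^ 3 + a ^ 6 * h * (a ^ 3 * h * x ^ 2 / y) := by
  field_simp
  grind

theorem weierstrass_of_cubic {a b c t h x₃ y₃ X Y : F} (ha : a ≠ 0)
    (hh : h = t + b ^ 4 * t ^ 2 / a ^ 2 + c ^ 4 / a ^ 6)
    (hcubic : y₃ ^ 2 = x₃ ^ 3 + a ^ 6 * h * x₃)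
    (hX : X = (x₃ + c ^ 2) / a ^ 2) (hY : Y = (y₃ + c * x₃ + c ^ 3 + c * b ^ 2 * a ^ 2 * t) / a ^ 3) :
    Y ^ 2 = X ^ 3 + (a ^ 2 * t + b ^ 4 * t ^ 2) * X + c ^ 2 * t := by
  subst hh hX hY
  field_simp
  grind

end CharTwoField

/-- Computational content of Lemma 6.1 of the paper (case `a₉ ≠ 0`): the quasi-elliptic
equation `y² + a₉y = tx⁴ + ta₄²x² + a₁₄x` transforms into the Weierstrass form
`Y² = X³ + (a₉²t + a₄⁴t²)X + a₁₄²t` of its relative Jacobian. -/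
theorem jacobian_weierstrass_form_of_ne_zero
    (F : Type*) [Field F] [CharP F 2]
    (t a₄ a₉ a₁₄ x y : F) (ha₉ : a₉ ≠ 0)
    (heq : y ^ 2 + a₉ * y = t * x ^ 4 + t * a₄ ^ 2 * x ^ 2 + a₁₄ * x)
    (y₁ h x₃ y₃ X Y : F)
    (hy₁ : y₁ = y + (a₁₄ / a₉) * x + (a₄ ^ 2 * t / a₉ + a₁₄ ^ 2 / a₉ ^ 3) * x ^ 2)
    (hh : h = t + a₄ ^ 4 * t ^ 2 / a₉ ^ 2 + a₁₄ ^ 4 / a₉ ^ 6)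
    (hy₁0 : y₁ ≠ 0)
    (hx₃ : x₃ = a₉ ^ 3 * h * x ^ 2 / y₁)
    (hy₃ : y₃ = a₉ ^ 5 * h * x / y₁)
    (hX : X = (x₃ + a₁₄ ^ 2) / a₉ ^ 2)
    (hY : Y = (y₃ + a₁₄ * x₃ + a₁₄ ^ 3 + a₁₄ * a₄ ^ 2 * a₉ ^ 2 * t) / a₉ ^ 3) :
    Y ^ 2 = X ^ 3 + (a₉ ^ 2 * t + a₄ ^ 4 * t ^ 2) * X + a₁₄ ^ 2 * t := by
  have hquartic : y₁ ^ 2 + a₉ * y₁ = h * x ^ 4 := by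
    rw [hy₁, hh]
    exact quartic_of_quadratic_shift ha₉ heq
  have hcubic : y₃ ^ 2 = x₃ ^ 3 + a₉ ^ 6 * h * x₃ := by
    rw [hx₃, hy₃]
    exact cubic_of_quartic hy₁0 hquartic
  exact weierstrass_of_cubic ha₉ hh hcubic hX hY
end

section
/- Let F be a field of characteristic 2 and let t, a₄, a₁₄, x, y ∈ F with x ≠ 0. Suppose y² = t·x⁴ + t·a₄²·x² + a₁₄·x. Define X = a₁₄/x + a₄²·t and Y = a₁₄·y/x². Then Y² = X³ + a₄⁴·t²·X + a₁₄²·t. -/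
/-!
In characteristic 2 the cubic `X³ + c²X` is `X (X + c)²`, and with `c = a₄²t` the factor
`X + c` is just `a₁₄ / x`. Dividing the curve equation by `x⁴` then gives
`Y² = (a₁₄ / x)² X + a₁₄² t` directly.
-/

theorem CharTwo.mul_add_sq {R : Type*} [CommSemiring R] [CharP R 2] (X c : R) :
    X * (X + c) ^ 2 = X ^ 3 + c ^ 2 * X := by
  rw [CharTwo.add_sq]
  ring

/-- Computational content of Lemma 6.1 of the paper (case `a₉ = 0`): the equation
`y² = tx⁴ + ta₄²x² + a₁₄x` transforms into the Weierstrass form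
`Y² = X³ + a₄⁴t²X + a₁₄²t` of its relative Jacobian. -/
theorem jacobian_weierstrass_form_of_eq_zero
    (F : Type*) [Field F] [CharP F 2]
    (t a₄ a₁₄ x y : F) (hx : x ≠ 0)
    (heq : y ^ 2 = t * x ^ 4 + t * a₄ ^ 2 * x ^ 2 + a₁₄ * x)
    (X Y : F)
    (hX : X = a₁₄ / x + a₄ ^ 2 * t)
    (hY : Y = a₁₄ * y / x ^ 2) :
    Y ^ 2 = X ^ 3 + a₄ ^ 4 * t ^ 2 * X + a₁₄ ^ 2 * t := by
  have hXc : X + a₄ ^ 2 * t = a₁₄ / x := by rw [hX, CharTwo.add_cancel_right]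
  calc Y ^ 2 = X * (a₁₄ / x) ^ 2 + a₁₄ ^ 2 * t := by
        rw [hY, hX, div_pow, mul_pow, heq]
        field_simp
        ring
    _ = X * (X + a₄ ^ 2 * t) ^ 2 + a₁₄ ^ 2 * t := by rw [hXc]
    _ = X ^ 3 + a₄ ^ 4 * t ^ 2 * X + a₁₄ ^ 2 * t := by rw [CharTwo.mul_add_sq]; ring
end

section
/- Let k be a field of characteristic 2 and let g, a₄, a₉, a₁₄ ∈ k[t] with g ≠ 0. Set Δ = (a₉²·t + a₄⁴·t²)·a₉⁴ + a₁₄⁴ ∈ k[t]. If g¹² divides Δ, then g² divides a₉, g³ divides a₁₄, and, writing a₉ = g²·a₁, the polynomial g divides a₁·a₄. -/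
open Polynomial

/-- In characteristic 2, the derivative of a square is zero. -/
private lemma derivative_sq_eq_zero {k : Type*} [Field k] [CharP k 2] (p : k[X]) :
    derivative (p ^ 2) = 0 := by
  rw [Polynomial.derivative_sq]
  have h2 : (2 : k) = 0 := CharTwo.two_eq_zero
  simp [h2]

/-- In characteristic 2, if `h² ∣ f` then `h² ∣ f'`. -/
private lemma sq_dvd_derivative {k : Type*} [Field k] [CharP k 2] {h f : k[X]}
    (hd : h ^ 2 ∣ f) : h ^ 2 ∣ derivative f := by
  obtain ⟨q, rfl⟩ := hd
  rw [derivative_mul, derivative_sq_eq_zero, zero_mul, zero_add]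
  exact Dvd.intro _ rfl

/-- The divisibility chain from the proof of Proposition 7.1 of the paper: if the
quasi-elliptic discriminant `Δ = (a₉²t + a₄⁴t²)a₉⁴ + a₁₄⁴` is divisible by `g¹²`,
then `g² ∣ a₉`, `g³ ∣ a₁₄`, and writing `a₉ = g²a₁` one has `g ∣ a₁a₄`. -/
theorem discriminant_divisibility
    (k : Type*) [Field k] [CharP k 2]
    (g a₄ a₉ a₁₄ : k[X]) (hg : g ≠ 0)
    (hdiv : g ^ 12 ∣ (a₉ ^ 2 * X + a₄ ^ 4 * X ^ 2) * a₉ ^ 4 + a₁₄ ^ 4) :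
    g ^ 2 ∣ a₉ ∧ g ^ 3 ∣ a₁₄ ∧ ∀ a₁ : k[X], a₉ = g ^ 2 * a₁ → g ∣ a₁ * a₄ := by
  -- Rewrite Δ in the form (a₉³)²·X + H² with H = (a₄a₉)²·X + a₁₄².
  have hchar : CharP k[X] 2 := by
    constructor
    intro n
    rw [← CharP.cast_eq_zero_iff k 2 n, ← Polynomial.C_eq_natCast, ← Polynomial.C_0]
    exact ⟨fun h => Polynomial.C_injective h, fun h => by rw [h]⟩
  set H : k[X] := (a₄ * a₉) ^ 2 * X + a₁₄ ^ 2 with hH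
  have hΔ : (a₉ ^ 2 * X + a₄ ^ 4 * X ^ 2) * a₉ ^ 4 + a₁₄ ^ 4
      = (a₉ ^ 3) ^ 2 * X + H ^ 2 := by
    rw [hH, CharTwo.add_sq]
    ring
  rw [hΔ] at hdiv
  -- derivative of Δ is (a₉³)²
  have hd12 : g ^ 12 = (g ^ 6) ^ 2 := by ring
  have hDΔ : derivative ((a₉ ^ 3) ^ 2 * X + H ^ 2) = (a₉ ^ 3) ^ 2 := by
    rw [derivative_add, derivative_sq_eq_zero, derivative_mul, derivative_sq_eq_zero]
    simp
  have hda : g ^ 12 ∣ (a₉ ^ 3) ^ 2 := by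
    rw [hd12] at hdiv ⊢
    have := sq_dvd_derivative hdiv
    rwa [hDΔ] at this
  -- g² ∣ a₉
  have h9 : g ^ 2 ∣ a₉ := by
    have : (g ^ 2) ^ 6 ∣ a₉ ^ 6 := by
      have e1 : (g ^ 2) ^ 6 = g ^ 12 := by ring
      have e2 : a₉ ^ 6 = (a₉ ^ 3) ^ 2 := by ring
      rw [e1, e2]; exact hda
    exact (IsIntegrallyClosed.pow_dvd_pow_iff (by norm_num : (6 : ℕ) ≠ 0)).mp this
  -- g^6 ∣ H
  have hH6 : g ^ 6 ∣ H := by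
    have hx : g ^ 12 ∣ (a₉ ^ 3) ^ 2 * X := hda.mul_right X
    have hH2 : (g ^ 6) ^ 2 ∣ H ^ 2 := by
      rw [← hd12]
      have := dvd_sub hdiv hx
      simpa using this
    exact (IsIntegrallyClosed.pow_dvd_pow_iff (by norm_num : (2 : ℕ) ≠ 0)).mp hH2
  -- g^6 divides derivative of H, which is (a₄a₉)²
  have hDH : derivative H = (a₄ * a₉) ^ 2 := by
    rw [hH, derivative_add, derivative_sq_eq_zero, derivative_mul, derivative_sq_eq_zero]
    simp
  have hda49 : g ^ 6 ∣ (a₄ * a₉) ^ 2 := by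
    have h6 : g ^ 6 = (g ^ 3) ^ 2 := by ring
    rw [h6] at hH6 ⊢
    have := sq_dvd_derivative hH6
    rwa [hDH] at this
  -- g³ ∣ a₄a₉
  have h349 : g ^ 3 ∣ a₄ * a₉ := by
    have : (g ^ 3) ^ 2 ∣ (a₄ * a₉) ^ 2 := by
      rw [show (g ^ 3) ^ 2 = g ^ 6 by ring]; exact hda49
    exact (IsIntegrallyClosed.pow_dvd_pow_iff (by norm_num : (2 : ℕ) ≠ 0)).mp this
  -- g³ ∣ a₁₄
  have h14 : g ^ 3 ∣ a₁₄ := by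
    have hx : g ^ 6 ∣ (a₄ * a₉) ^ 2 * X := hda49.mul_right X
    have h142 : (g ^ 3) ^ 2 ∣ a₁₄ ^ 2 := by
      have : g ^ 6 ∣ H - (a₄ * a₉) ^ 2 * X := dvd_sub hH6 hx
      rw [hH] at this
      simp only [add_sub_cancel_left] at this
      rwa [show (g ^ 3) ^ 2 = g ^ 6 by ring]
    exact (IsIntegrallyClosed.pow_dvd_pow_iff (by norm_num : (2 : ℕ) ≠ 0)).mp h142
  refine ⟨h9, h14, fun a₁ h1 => ?_⟩
  -- from g^6 ∣ (a₄ g² a₁)² = g⁴ (a₁ a₄)², cancel g⁴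
  have key : (a₄ * a₉) ^ 2 = g ^ 4 * (a₁ * a₄) ^ 2 := by rw [h1]; ring
  have hdvd : g ^ 4 * g ^ 2 ∣ g ^ 4 * (a₁ * a₄) ^ 2 := by
    rw [← key, show g ^ 4 * g ^ 2 = g ^ 6 by ring]; exact hda49
  have hsq : g ^ 2 ∣ (a₁ * a₄) ^ 2 :=
    (mul_dvd_mul_iff_left (pow_ne_zero 4 hg)).mp hdvd
  have hsq2 : g ^ 2 ∣ (a₁ * a₄) ^ 2 := hsq
  exact (IsIntegrallyClosed.pow_dvd_pow_iff (by norm_num : (2 : ℕ) ≠ 0)).mp hsq2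
end

section
/- Let R be a commutative ring in which 2 = 0, and let t, h₂, h₃, h₄, h₆, g₂, g₅, g₆, g₈, x, y ∈ R satisfy h₄·g₂ = h₃² + t·h₂² and h₄·y² + h₆·y = g₂·x⁴ + g₅·x² + g₆·x + g₈. Set X = h₂·x and Y = h₂·(h₄·y + h₃·x²). Then Y² + h₂·h₆·Y = t·X⁴ + (h₄·g₅ + h₃·h₆)·X² + h₂·h₄·g₆·X + h₂²·h₄·g₈. -/
/-- The change of variables in Section 5 of the paper converting the Queen-type
equation `h₄y² + h₆y = g₂x⁴ + g₅x² + g₆x + g₈`, after writing `h₄g₂ = h₃² + th₂²`,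
into the general normal form of equation (5.1). -/
theorem queen_to_normal_form
    (R : Type*) [CommRing R] (h2 : (2 : R) = 0)
    (t h₂ h₃ h₄ h₆ g₂ g₅ g₆ g₈ x y : R)
    (hfac : h₄ * g₂ = h₃ ^ 2 + t * h₂ ^ 2)
    (heq : h₄ * y ^ 2 + h₆ * y = g₂ * x ^ 4 + g₅ * x ^ 2 + g₆ * x + g₈)
    (X Y : R)
    (hX : X = h₂ * x)
    (hY : Y = h₂ * (h₄ * y + h₃ * x ^ 2)) :
    Y ^ 2 + h₂ * h₆ * Y
      = t * X ^ 4 + (h₄ * g₅ + h₃ * h₆) * X ^ 2 + h₂ * h₄ * g₆ * X + h₂ ^ 2 * h₄ * g₈ := by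
  subst hX hY
  linear_combination h₂ ^ 2 * h₄ * heq + h₂ ^ 2 * x ^ 4 * hfac +
    (h₂ ^ 2 * h₄ * h₃ * x ^ 2 * y   + h₂ ^ 2 * h₃ ^ 2 * x ^ 4) * h2
end

section
/- Let k be a field of characteristic 2 and let b ∈ k with b ≠ 0 and b ≠ 1. Set c = b⁴/(b+1)⁸ and define F(x, y, t) = y² + (t+1)·t²·y + t·x⁴ + t³·x² + (t+1)·t⁴·x + c·t³·(t+b)⁴ as a polynomial in three variables over k. Then for a triple (β, d, d′) ∈ k³, the identity F(x + β·t, y + d·t² + d′·t³, t) = F(x, y, t) holds in k[x, y, t] if and only if (β, d, d′) = (0, 0, 0) or (β, d, d′) = (0, 1, 1). -/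
open MvPolynomial

/-- The polynomial `F(x, y, t) = y² + (t+1)t²y + tx⁴ + t³x² + (t+1)t⁴x + ct³(t+b)⁴`
with `c = b⁴/(b+1)⁸`, defining the family (c4) of type `Γ = Ẽ₆ + Ã₂`;
variables `x = X 0`, `y = X 1`, `t = X 2`. -/
noncomputable def e6a2Poly {k : Type*} [Field k] (b : k) : MvPolynomial (Fin 3) k :=
  (X 1) ^ 2 + (X 2 + 1) * (X 2) ^ 2 * X 1 + X 2 * (X 0) ^ 4 + (X 2) ^ 3 * (X 0) ^ 2
    + (X 2 + 1) * (X 2) ^ 4 * X 0 + C (b ^ 4 / (b + 1) ^ 8) * (X 2) ^ 3 * (X 2 + C b) ^ 4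

/-- Key computation: the effect of the substitution on `e6a2Poly` in characteristic 2. -/
lemma e6a2_subst_eq (k : Type*) [Field k] [CharP k 2] (b β d d' : k) :
    aeval ![X 0 + C β * X 2, X 1 + C d * (X 2) ^ 2 + C d' * (X 2) ^ 3, X 2] (e6a2Poly b)
      = e6a2Poly b + C (d ^ 2 + d) * (X 2 : MvPolynomial (Fin 3) k) ^ 4
        + C (β ^ 4 + β ^ 2 + β + d + d') * (X 2) ^ 5
        + C (d' ^ 2 + d' + β) * (X 2) ^ 6 := by
  have h2 : (2 : MvPolynomial (Fin 3) k) = 0 := by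
    rw [← map_ofNat (C : k →+* MvPolynomial (Fin 3) k) 2, CharTwo.two_eq_zero, map_zero]
  simp only [e6a2Poly, map_add, map_mul, map_pow, aeval_X, aeval_C, map_one,
    MvPolynomial.algebraMap_eq,
    Matrix.cons_val_zero, Matrix.cons_val_one, Matrix.head_cons, Matrix.cons_val_two,
    Matrix.tail_cons]
  linear_combination (C d * X 1 * X 2 ^ 2 + C d' * X 1 * X 2 ^ 3 + C d * C d' * X 2 ^ 5
    + 2 * C β * X 0 ^ 3 * X 2 ^ 2 + 3 * C β ^ 2 * X 0 ^ 2 * X 2 ^ 3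
    + 2 * C β ^ 3 * X 0 * X 2 ^ 4 + C β * X 0 * X 2 ^ 4) * h2

/-- The claim of Section 14.7.3 of the paper: the substitutions
`(x, y, t) ↦ (x + βt, y + dt² + d′t³, t)` preserving the equation of family (c4)
are exactly `(β, d, d′) = (0, 0, 0)` and `(β, d, d′) = (0, 1, 1)`. -/
theorem e6a2_numerically_trivial_solutions
    (k : Type*) [Field k] [CharP k 2] (b : k) (hb0 : b ≠ 0) (hb1 : b ≠ 1)
    (β d d' : k) :
    aeval ![X 0 + C β * X 2, X 1 + C d * (X 2) ^ 2 + C d' * (X 2) ^ 3, X 2] (e6a2Poly b)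
        = e6a2Poly b ↔
      ((β, d, d') = ((0 : k), (0 : k), (0 : k)) ∨ (β, d, d') = ((0 : k), (1 : k), (1 : k))) := by
  have h2k : (2 : k) = 0 := CharTwo.two_eq_zero
  rw [e6a2_subst_eq]
  constructor
  · intro h
    have hP : C (d ^ 2 + d) * (X 2 : MvPolynomial (Fin 3) k) ^ 4
        + C (β ^ 4 + β ^ 2 + β + d + d') * (X 2) ^ 5
        + C (d' ^ 2 + d' + β) * (X 2) ^ 6 = 0 := by linear_combination h
    have h4 := congrArg (coeff (Finsupp.single 2 4)) hP
    have h5 := congrArg (coeff (Finsupp.single 2 5)) hP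
    have h6 := congrArg (coeff (Finsupp.single 2 6)) hP
    simp only [coeff_add, coeff_C_mul, coeff_X_pow, coeff_zero] at h4 h5 h6
    norm_num [Finsupp.single_eq_single_iff] at h4 h5 h6
    have hβ : β = d' ^ 2 + d' := by linear_combination β * h2k - h6
    rw [hβ] at h5
    have hd8 : d' ^ 8 = d := by
      linear_combination h5 - (2 * d' ^ 7 + 3 * d' ^ 6 + 2 * d' ^ 5 + d' ^ 4 + d' ^ 3
        + d' ^ 2 + d' + d) * h2k
    have hd01 : d = 0 ∨ d = 1 := by
      rcases mul_eq_zero.mp (show d * (d + 1) = 0 by linear_combination h4) with h | h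
      · exact Or.inl h
      · exact Or.inr (by linear_combination h - h2k)
    rcases hd01 with hd | hd
    · left
      have hd'0 : d' = 0 := by
        have : d' ^ 8 = 0 := by rw [hd8, hd]
        exact pow_eq_zero_iff (by norm_num) |>.mp this
      subst hd'0 hd
      simp [hβ]
    · right
      have hd'1 : d' = 1 := by
        have h8 : (d' + 1) ^ 8 = 0 := by
          linear_combination hd8 + hd + (4 * d' ^ 7 + 14 * d' ^ 6 + 28 * d' ^ 5 + 35 * d' ^ 4
            + 28 * d' ^ 3 + 14 * d' ^ 2 + 4 * d' + 1) * h2k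
        have := pow_eq_zero_iff (n := 8) (by norm_num) |>.mp h8
        linear_combination this - h2k
      subst hd'1 hd
      have hβ0 : β = 0 := by linear_combination hβ + h2k
      simp [hβ0]
  · intro h
    rcases h with h | h
    · obtain ⟨hβ, hd, hd'⟩ : β = 0 ∧ d = 0 ∧ d' = 0 := by
        simpa [Prod.ext_iff] using h
      subst hβ hd hd'
      norm_num
    · obtain ⟨hβ, hd, hd'⟩ : β = 0 ∧ d = 1 ∧ d' = 1 := by
        simpa [Prod.ext_iff] using h
      subst hβ hd hd'
      have hC2 : (C (2 : k) : MvPolynomial (Fin 3) k) = 0 := by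
        rw [h2k, map_zero]
      norm_num [hC2]
end

section
/- Let F be a field of characteristic 2 and let t, u, v, s ∈ F with s ≠ 0 and u² + t·(t+1)² ≠ 0. Set a = s², and suppose v² = t·u⁴ + a·t²·u³ + a·t³·(t+1)²·u + t³·(t+1)⁴. Define x = (t+1)·v / (s·(u² + t·(t+1)²)), y = t³·(t+1)³ / (u² + t·(t+1)²), and c = 1/a². Then y² + t²·(t+1)·y = t·x⁴ + c·t³·(t+1)⁴. -/
/-- The explicit birational transformation at the end of Section 14.8 of the paper,
identifying the normal form `y² + t²(t+1)y = tx⁴ + ct³(1+t)⁴` of the type VIII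
Enriques surfaces with the family `v² = tu⁴ + at²u³ + at³(t+1)²u + t³(t+1)⁴`. -/
theorem typeVIII_birational_identification
    (F : Type*) [Field F] [CharP F 2]
    (t u v s : F) (hs : s ≠ 0) (hden : u ^ 2 + t * (t + 1) ^ 2 ≠ 0)
    (a x y c : F) (ha : a = s ^ 2)
    (hv : v ^ 2 = t * u ^ 4 + a * t ^ 2 * u ^ 3 + a * t ^ 3 * (t + 1) ^ 2 * u
          + t ^ 3 * (t + 1) ^ 4)
    (hx : x = (t + 1) * v / (s * (u ^ 2 + t * (t + 1) ^ 2)))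
    (hy : y = t ^ 3 * (t + 1) ^ 3 / (u ^ 2 + t * (t + 1) ^ 2))
    (hc : c = 1 / a ^ 2) :
    y ^ 2 + t ^ 2 * (t + 1) * y = t * x ^ 4 + c * t ^ 3 * (t + 1) ^ 4 := by
  have h2 : (2 : F) = 0 := by exact_mod_cast CharP.cast_eq_zero F 2
  subst ha
  have hyD : y * (u ^ 2 + t * (t + 1) ^ 2) = t ^ 3 * (t + 1) ^ 3 := by
    rw [hy]; field_simp
  have hxD : x * (s * (u ^ 2 + t * (t + 1) ^ 2)) = (t + 1) * v := by
    rw [hx]; field_simp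
  have hcs : c * s ^ 4 = 1 := by
    rw [hc]; field_simp
  have hne : (u ^ 2 + t * (t + 1) ^ 2) ^ 4 * s ^ 4 ≠ 0 :=
    mul_ne_zero (pow_ne_zero _ hden) (pow_ne_zero _ hs)
  apply mul_right_cancel₀ hne
  set D := u ^ 2 + t * (t + 1) ^ 2 with hD
  linear_combination
    ((y * D + t ^ 3 * (t + 1) ^ 3) * D ^ 2 * s ^ 4) * hyD
    + (t ^ 2 * (t + 1) * D ^ 3 * s ^ 4) * hyD
    - (t * ((x * s * D) ^ 3 + (x * s * D) ^ 2 * ((t + 1) * v)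
        + (x * s * D) * ((t + 1) * v) ^ 2 + ((t + 1) * v) ^ 3)) * hxD
    - (t * (t + 1) ^ 4 * (v ^ 2 + (t * u ^ 4 + s ^ 2 * t ^ 2 * u ^ 3
        + s ^ 2 * t ^ 3 * (t + 1) ^ 2 * u + t ^ 3 * (t + 1) ^ 4))) * hv
    - (t ^ 3 * (t + 1) ^ 4 * D ^ 4) * hcs
    + ((-1:F)*t^3*u^8 + (-2:F)*t^4*u^6 + (-1:F)*t^4*u^7*s^2 + (-4:F)*t^4*u^8 + (-4:F)*t^5*u^4 + (-1:F)*t^5*u^5*s^2 + (-12:F)*t^5*u^6 + (-4:F)*t^5*u^7*s^2 + (-6:F)*t^5*u^8 + (-2:F)*t^6*u^2 + (-1:F)*t^6*u^3*s^2 + (-32:F)*t^6*u^4 + (1:F)*t^6*u^4*s^4 + (-6:F)*t^6*u^5*s^2 + (-30:F)*t^6*u^6 + (-6:F)*t^6*u^7*s^2 + (-4:F)*t^6*u^8 + (-1:F)*t^7 + (-1:F)*t^7*u^1*s^2 + (-20:F)*t^7*u^2 + (2:F)*t^7*u^2*s^4 + (-8:F)*t^7*u^3*s^2 + (-112:F)*t^7*u^4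 + (6:F)*t^7*u^4*s^4 + (-15:F)*t^7*u^5*s^2 + (-40:F)*t^7*u^6 + (-4:F)*t^7*u^7*s^2 + (-1:F)*t^7*u^8 + (-12:F)*t^8 + (1:F)*t^8*s^4 + (-10:F)*t^8*u^1*s^2 + (-90:F)*t^8*u^2 + (16:F)*t^8*u^2*s^4 + (-28:F)*t^8*u^3*s^2 + (-224:F)*t^8*u^4 + (15:F)*t^8*u^4*s^4 + (-20:F)*t^8*u^5*s^2 + (-30:F)*t^8*u^6 + (-1:F)*t^8*u^7*s^2 + (-66:F)*t^9 + (10:F)*t^9*s^4 + (-45:F)*t^9*u^1*s^2 + (-240:F)*t^9*u^2 + (56:F)*t^9*u^2*s^4 + (-56:F)*t^9*u^3*s^2 + (-280:F)*t^9*u^4 + (20:F)*t^9*u^4*s^4 + (-15:F)*t^9*u^5*s^2 + (-12:F)*t^9*u^6 + (-220:F)*t^10 + (45:F)*t^10*s^4 + (-120:F)*t^10*u^1*s^2 + (-420:F)*t^10*u^2 + (112:F)*t^10*u^2*s^4 + (-70:F)*t^10*u^3*s^2 + (-224:F)*t^10*u^4 + (15:F)*t^10*u^4*s^4 + (-6:F)*t^10*u^5*s^2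 + (-2:F)*t^10*u^6 + (-495:F)*t^11 + (120:F)*t^11*s^4 + (-210:F)*t^11*u^1*s^2 + (-504:F)*t^11*u^2 + (140:F)*t^11*u^2*s^4 + (-56:F)*t^11*u^3*s^2 + (-112:F)*t^11*u^4 + (6:F)*t^11*u^4*s^4 + (-1:F)*t^11*u^5*s^2 + (-792:F)*t^12 + (210:F)*t^12*s^4 + (-252:F)*t^12*u^1*s^2 + (-420:F)*t^12*u^2 + (112:F)*t^12*u^2*s^4 + (-28:F)*t^12*u^3*s^2 + (-32:F)*t^12*u^4 + (1:F)*t^12*u^4*s^4 + (-924:F)*t^13 + (252:F)*t^13*s^4 + (-210:F)*t^13*u^1*s^2 + (-240:F)*t^13*u^2 + (56:F)*t^13*u^2*s^4 + (-8:F)*t^13*u^3*s^2 + (-4:F)*t^13*u^4 + (-792:F)*t^14 + (210:F)*t^14*s^4 + (-120:F)*t^14*u^1*s^2 + (-90:F)*t^14*u^2 + (16:F)*t^14*u^2*s^4 + (-1:F)*t^14*u^3*s^2 + (-495:F)*t^15 + (120:F)*t^15*s^4 + (-45:F)*t^15*u^1*s^2 + (-20:F)*t^15*u^2 + (2:F)*t^15*u^2*s^4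 + (-220:F)*t^16 + (45:F)*t^16*s^4 + (-10:F)*t^16*u^1*s^2 + (-2:F)*t^16*u^2 + (-66:F)*t^17 + (10:F)*t^17*s^4 + (-1:F)*t^17*u^1*s^2 + (-12:F)*t^18 + (1:F)*t^18*s^4 + (-1:F)*t^19) * h2
end
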